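/- The bracket [·,·]_H satisfies the Leibniz rule with respect to the associative product of A: [u, vw]_H = [u,v]_H w + v[u,w]_H for all u, v, w ∈ A. Hence (A, ·, [·,·]_H) is a Poisson algebra. -/

import Mathlib

noncomputable section

open scoped BigOperators
open scoped Classical

variable (F : Type*) [Field F] [CharZero F]

/-- `J = J_1 × ⋯ × J_n` as an additive submonoid of `ℕ^n`. -/
def Jpi (n : ℕ) (Jp : Fin n → AddSubmonoid ℕ) : AddSubmonoid (Fin n → ℕ) :=
  AddSubmonoid.pi Set.univ Jp

lemma sub_single_mem {n : ℕ} {Jp : Fin n → AddSubmonoid ℕ}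
    (hJ : ∀ p, Jp p = ⊥ ∨ Jp p = ⊤) (i : Jpi n Jp) (p : Fin n)
    (h : (i : Fin n → ℕ) p ≠ 0) : ((i : Fin n → ℕ) - Pi.single p 1) ∈ Jpi n Jp := by
  have key : ∀ q : Fin n, (i : Fin n → ℕ) q - (Pi.single p 1 : Fin n → ℕ) q ∈ Jp q := by
    intro q
    rcases hJ q with hq | hq
    · have hiq : (i : Fin n → ℕ) q ∈ Jp q := i.2 q (Set.mem_univ q)
      rw [hq] at hiq
      simp only [AddSubmonoid.mem_bot] at hiq
      by_cases hpq : q = p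
      · subst hpq; exact absurd hiq h
      · rw [hq, AddSubmonoid.mem_bot]
        simp [Pi.single_eq_of_ne hpq, hiq]
    · rw [hq]; trivial
  intro q _
  exact key q

variable (k : ℕ) (Γ0 : Type*) [AddCommGroup Γ0]
  (Γ1 : AddSubgroup (Fin (2*k) → F)) (Jp : Fin (2*k) → AddSubmonoid ℕ)

/-- The semigroup algebra `A` of `Γ × J = (Γ_0 ⊕ Γ_1) × J` over `𝔽`. -/
abbrev AH : Type _ := AddMonoidAlgebra F (Γ0 × Γ1 × Jpi (2*k) Jp)

/-- The first half index `p ∈ {1,…,k}` inside `{1,…,2k}` (0-based). -/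
def idxA (p : Fin k) : Fin (2*k) := ⟨p, by have := p.isLt; omega⟩

/-- The second half index `k+p` inside `{1,…,2k}` (0-based). -/
def idxB (p : Fin k) : Fin (2*k) := ⟨k + p, by have := p.isLt; omega⟩

/-- The derivation `∂_p` of `A`, `∂_p(x^{ᾱ,i}) = α_p x^{ᾱ,i} + i_p x^{ᾱ,i-1_[p]}`. -/
def ddH (hJ : ∀ p, Jp p = ⊥ ∨ Jp p = ⊤) (p : Fin (2*k)) :
    Module.End F (AH F k Γ0 Γ1 Jp) :=
  (Finsupp.lsum F fun (g : Γ0 × Γ1 × Jpi (2*k) Jp) =>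
    ((g.2.1 : Fin (2*k) → F) p) • AddMonoidAlgebra.lsingle (R := F) g +
    (if h : (g.2.2 : Fin (2*k) → ℕ) p = 0 then 0 else
      (((g.2.2 : Fin (2*k) → ℕ) p : F)) • AddMonoidAlgebra.lsingle (R := F)
        (g.1, g.2.1,
          ⟨(g.2.2 : Fin (2*k) → ℕ) - Pi.single p 1, sub_single_mem hJ g.2.2 p h⟩)))
    ∘ₗ (AddMonoidAlgebra.coeffLinearEquiv F).toLinearMap

/-- `X_p(Γ_1) ≠ {0}`. -/
def XneH (q : Fin (2*k)) : Prop := ∃ v ∈ Γ1, v q ≠ 0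

/-- The radical of the skew-symmetric `ℤ`-bilinear form `φ` on `Γ = Γ_0 ⊕ Γ_1`. -/
def RadH (φ : (Γ0 × Γ1) →+ (Γ0 × Γ1) →+ F) : Set (Γ0 × Γ1) :=
  {a | ∀ b, φ a b = 0}

/-- The scalar `φ(ᾱ,β̄) − Σ_{p=k_1+1}^k (α_p β_{k+p} − α_{k+p} β_p)` attached to a pair
of basis monomials of `A`. -/
def coefH (φ : (Γ0 × Γ1) →+ (Γ0 × Γ1) →+ F) (k1 : ℕ)
    (g1 g2 : Γ0 × Γ1 × Jpi (2*k) Jp) : F :=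
  φ (g1.1, g1.2.1) (g2.1, g2.2.1) -
    ∑ p ∈ Finset.univ.filter (fun p : Fin k => k1 ≤ (p : ℕ)),
      ((g1.2.1 : Fin (2*k) → F) (idxA k p) * (g2.2.1 : Fin (2*k) → F) (idxB k p)
        - (g1.2.1 : Fin (2*k) → F) (idxB k p) * (g2.2.1 : Fin (2*k) → F) (idxA k p))

/-- The Hamiltonian bracket (4.21):
`[u,v]_H = Σ_{p=1}^k x^{σ_p,0}(∂_p(u)∂_{k+p}(v) − ∂_{k+p}(u)∂_p(v))
 + (φ(ᾱ,β̄) − Σ_{p=k_1+1}^k (α_p β_{k+p} − α_{k+p} β_p)) u v`,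
extended bilinearly from homogeneous components. -/
def brH (hJ : ∀ p, Jp p = ⊥ ∨ Jp p = ⊤) (φ : (Γ0 × Γ1) →+ (Γ0 × Γ1) →+ F) (k1 : ℕ)
    (σp : Fin k → Γ1) (u v : AH F k Γ0 Γ1 Jp) : AH F k Γ0 Γ1 Jp :=
  (∑ p : Fin k,
    (AddMonoidAlgebra.single ((0 : Γ0), σp p, (0 : Jpi (2*k) Jp)) (1 : F)) *
      (ddH F k Γ0 Γ1 Jp hJ (idxA k p) u * ddH F k Γ0 Γ1 Jp hJ (idxB k p) v
        - ddH F k Γ0 Γ1 Jp hJ (idxB k p) u * ddH F k Γ0 Γ1 Jp hJ (idxA k p) v))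
  + Finsupp.sum u.coeff (fun g1 c1 => Finsupp.sum v.coeff (fun g2 c2 =>
      AddMonoidAlgebra.single (g1 + g2) (coefH F k Γ0 Γ1 Jp φ k1 g1 g2 * (c1 * c2))))

/-!
The bracket is the sum of two parts, each satisfying the Leibniz rule in its second argument.
The first, `Σ_p x^{σ_p,0} (∂_p u · ∂_{k+p} v − ∂_{k+p} u · ∂_p v)`, does so because every `∂_p`
is a derivation of `A`; this is checked on monomials, where the shift `i ↦ i − 1_[p]` commutes
with adding exponents whenever it is not killed by the factor `i_p`. The second is the bilinear
extension of `x^a · x^b ↦ c(a, b) x^{a+b}`, and such a twisted product satisfies the Leibniz rule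
as soon as `c` is additive in its second argument, as
`c(ᾱ, β̄) = φ(ᾱ,β̄) − Σ (α_p β_{k+p} − α_{k+p} β_p)` is.
-/

namespace AddMonoidAlgebra

variable {R G : Type*} [CommSemiring R]

theorem map_mul_of_map_single_mul_single [AddMonoid G]
    (D : AddMonoidAlgebra R G →ₗ[R] AddMonoidAlgebra R G)
    (h : ∀ a b r s,
      D (single a r * single b s) = D (single a r) * single b s + single a r * D (single b s))
    (u v : AddMonoidAlgebra R G) : D (u * v) = D u * v + u * D v := by
  induction u using induction_linear with
  | zero => simp
  | add u u' hu hu' => simp only [add_mul, map_add, hu, hu']; abel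
  | single a r =>
    induction v using induction_linear with
    | zero => simp
    | add v v' hv hv' => simp only [mul_add, map_add, hv, hv']; abel
    | single b s => exact h a b r s

def twistedMul [AddMonoid G] (c : G → G → R) (u v : AddMonoidAlgebra R G) :
    AddMonoidAlgebra R G :=
  u.coeff.sum fun a r => v.coeff.sum fun b s => single (a + b) (c a b * (r * s))

variable [AddCommMonoid G] (c : G → G → R)

theorem twistedMul_add_right (u v w : AddMonoidAlgebra R G) :
    twistedMul c u (v + w) = twistedMul c u v + twistedMul c u w := by
  rw [twistedMul, twistedMul, twistedMul, ← Finsupp.sum_add]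
  refine Finsupp.sum_congr fun a _ => ?_
  rw [coeff_add, Finsupp.sum_add_index' (fun _ => by simp)
    (fun _ _ _ => by rw [mul_add, mul_add, single_add])]

theorem twistedMul_single_right (u : AddMonoidAlgebra R G) (b : G) (s : R) :
    twistedMul c u (single b s) = u.coeff.sum fun a r => single (a + b) (c a b * (r * s)) :=
  Finsupp.sum_congr fun _ _ => by rw [coeff_single, Finsupp.sum_single_index (by simp)]

theorem twistedMul_mul_right (hc : ∀ a b b', c a (b + b') = c a b + c a b')
    (u v w : AddMonoidAlgebra R G) :
    twistedMul c u (v * w) = twistedMul c u v * w + v * twistedMul c u w := by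
  induction v using induction_linear with
  | zero => simp [twistedMul]
  | add v v' hv hv' => rw [add_mul, twistedMul_add_right, twistedMul_add_right, hv, hv']; ring
  | single b s =>
    induction w using induction_linear with
    | zero => simp [twistedMul]
    | add w w' hw hw' => rw [mul_add, twistedMul_add_right, twistedMul_add_right, hw, hw']; ring
    | single b' s' =>
      rw [single_mul_single, twistedMul_single_right, twistedMul_single_right,
        twistedMul_single_right, Finsupp.sum_mul, Finsupp.mul_sum, ← Finsupp.sum_add]
      refine Finsupp.sum_congr fun a _ => ?_
      rw [single_mul_single, single_mul_single, hc, add_mul, single_add]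
      congr 2 <;> first | abel | ring

end AddMonoidAlgebra

theorem mul_sub_mul_mul_right_of_leibniz {A : Type*} [CommRing A] {D E : A → A}
    (hD : ∀ x y, D (x * y) = D x * y + x * D y) (hE : ∀ x y, E (x * y) = E x * y + x * E y)
    (s u v w : A) :
    s * (D u * E (v * w) - E u * D (v * w))
      = s * (D u * E v - E u * D v) * w + v * (s * (D u * E w - E u * D w)) := by
  rw [hD, hE]; ring

namespace Jpi

variable {n : ℕ} {Jp : Fin n → AddSubmonoid ℕ}

theorem sub_single_one_mem (hJ : ∀ p, Jp p = ⊥ ∨ Jp p = ⊤) (i : Jpi n Jp) (p : Fin n) :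
    (i : Fin n → ℕ) - Pi.single p 1 ∈ Jpi n Jp := by
  by_cases h : (i : Fin n → ℕ) p = 0
  · have hi : (i : Fin n → ℕ) - Pi.single p 1 = (i : Fin n → ℕ) := by
      ext q
      rcases eq_or_ne q p with rfl | hq
      · simp [h]
      · simp [Pi.single_eq_of_ne hq]
    rw [hi]; exact i.2
  · exact sub_single_mem hJ i p h

/-- The exponent `i - 1_[p]`; it is truncated to `i` when `i_p = 0`, but it only ever occurs
weighted by `i_p`. -/
def lower (hJ : ∀ p, Jp p = ⊥ ∨ Jp p = ⊤) (i : Jpi n Jp) (p : Fin n) : Jpi n Jp :=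
  ⟨(i : Fin n → ℕ) - Pi.single p 1, sub_single_one_mem hJ i p⟩

variable {hJ : ∀ p, Jp p = ⊥ ∨ Jp p = ⊤}

theorem lower_add_of_ne_zero_left {i : Jpi n Jp} {p : Fin n} (h : (i : Fin n → ℕ) p ≠ 0)
    (i' : Jpi n Jp) : lower hJ (i + i') p = lower hJ i p + i' := by
  ext q
  rcases eq_or_ne q p with rfl | hq
  · simp [lower]; omega
  · simp [lower, Pi.single_eq_of_ne hq]

theorem lower_add_of_ne_zero_right (i : Jpi n Jp) {i' : Jpi n Jp} {p : Fin n}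
    (h : (i' : Fin n → ℕ) p ≠ 0) : lower hJ (i + i') p = i + lower hJ i' p := by
  ext q
  rcases eq_or_ne q p with rfl | hq
  · simp [lower]; omega
  · simp [lower, Pi.single_eq_of_ne hq]

variable {S M : Type*} [Semiring S] [AddCommMonoid M] [Module S M] (f : Jpi n Jp → M)

theorem cast_smul_lower_add_left (i i' : Jpi n Jp) (p : Fin n) :
    ((i : Fin n → ℕ) p : S) • f (lower hJ (i + i') p)
      = ((i : Fin n → ℕ) p : S) • f (lower hJ i p + i') := by
  by_cases h : (i : Fin n → ℕ) p = 0
  · simp [h]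
  · rw [lower_add_of_ne_zero_left h]

theorem cast_smul_lower_add_right (i i' : Jpi n Jp) (p : Fin n) :
    ((i' : Fin n → ℕ) p : S) • f (lower hJ (i + i') p)
      = ((i' : Fin n → ℕ) p : S) • f (i + lower hJ i' p) := by
  by_cases h : (i' : Fin n → ℕ) p = 0
  · simp [h]
  · rw [lower_add_of_ne_zero_right i h]

end Jpi

open AddMonoidAlgebra

theorem ddH_single (hJ : ∀ p, Jp p = ⊥ ∨ Jp p = ⊤) (p : Fin (2*k)) (a : Γ0) (b : Γ1)
    (i : Jpi (2*k) Jp) (r : F) :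
    ddH F k Γ0 Γ1 Jp hJ p (single (a, b, i) r)
      = (b : Fin (2*k) → F) p • single (a, b, i) r
        + ((i : Fin (2*k) → ℕ) p : F) • single (a, b, Jpi.lower hJ i p) r := by
  show Finsupp.lsum F _ (Finsupp.single (a, b, i) r) = _
  rw [Finsupp.lsum_single]
  by_cases h : (i : Fin (2*k) → ℕ) p = 0
  · simp [h]
  · rw [dif_neg h]; rfl

theorem ddH_mul (hJ : ∀ p, Jp p = ⊥ ∨ Jp p = ⊤) (p : Fin (2*k)) (u v : AH F k Γ0 Γ1 Jp) :
    ddH F k Γ0 Γ1 Jp hJ p (u * v)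
      = ddH F k Γ0 Γ1 Jp hJ p u * v + u * ddH F k Γ0 Γ1 Jp hJ p v := by
  refine map_mul_of_map_single_mul_single _ (fun ⟨a, b, i⟩ ⟨a', b', i'⟩ r s => ?_) u v
  rw [single_mul_single, Prod.mk_add_mk, Prod.mk_add_mk, ddH_single, ddH_single, ddH_single]
  simp only [AddSubmonoid.coe_add, Pi.add_apply, Nat.cast_add, add_smul]
  rw [Jpi.cast_smul_lower_add_left (fun j => single (a + a', b + b', j) (r * s)),
    Jpi.cast_smul_lower_add_right (fun j => single (a + a', b + b', j) (r * s))]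
  simp only [AddSubgroup.coe_add, Pi.add_apply, add_smul, add_mul, mul_add, smul_mul_assoc,
    mul_smul_comm, single_mul_single, Prod.mk_add_mk]
  abel

theorem coefH_add_right {K Γ : Type*} [Field K] [AddCommGroup Γ] {n : ℕ}
    {Λ : AddSubgroup (Fin (2*n) → K)} {J : Fin (2*n) → AddSubmonoid ℕ}
    (φ : (Γ × Λ) →+ (Γ × Λ) →+ K) (k1 : ℕ) (g g' g'' : Γ × Λ × Jpi (2*n) J) :
    coefH K n Γ Λ J φ k1 g (g' + g'')
      = coefH K n Γ Λ J φ k1 g g' + coefH K n Γ Λ J φ k1 g g'' := by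
  have hφ : φ (g.1, g.2.1) ((g' + g'').1, (g' + g'').2.1)
      = φ (g.1, g.2.1) (g'.1, g'.2.1) + φ (g.1, g.2.1) (g''.1, g''.2.1) := map_add _ (_, _) (_, _)
  rw [coefH, coefH, coefH, hφ, sub_add_sub_comm, ← Finset.sum_add_distrib]
  congr 1
  refine Finset.sum_congr rfl fun _ _ => ?_
  simp only [Prod.snd_add, Prod.fst_add, AddSubgroup.coe_add, Pi.add_apply]
  ring

theorem brH_leibniz
    (hJ : ∀ p, Jp p = ⊥ ∨ Jp p = ⊤)
    (k1 : ℕ)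
    (φ : (Γ0 × Γ1) →+ (Γ0 × Γ1) →+ F)
    (σp : Fin k → Γ1) :
    ∀ u v w : AH F k Γ0 Γ1 Jp,
      brH F k Γ0 Γ1 Jp hJ φ k1 σp u (v * w)
        = brH F k Γ0 Γ1 Jp hJ φ k1 σp u v * w + v * brH F k Γ0 Γ1 Jp hJ φ k1 σp u w := by
  intro u v w
  set c := coefH F k Γ0 Γ1 Jp φ k1
  show _ + twistedMul c u (v * w) = (_ + twistedMul c u v) * w + v * (_ + twistedMul c u w)
  have hterm (p : Fin k) := mul_sub_mul_mul_right_of_leibniz (ddH_mul F k Γ0 Γ1 Jp hJ (idxA k p))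
    (ddH_mul F k Γ0 Γ1 Jp hJ (idxB k p)) (single (0, σp p, 0) 1) u v w
  rw [twistedMul_mul_right c (coefH_add_right φ k1), Finset.sum_congr rfl fun p _ => hterm p,
    Finset.sum_add_distrib, ← Finset.sum_mul, ← Finset.mul_sum]
  ring
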